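/- arXiv:2506.07439 — 3 statements merged into one kernel-verified Lean document; each statement's English description precedes it below -/
import Mathlib

section
/- For the Johnson scheme eigenvalue formula, λ_j^0 := Σ_{ℓ=0}^{k} (−1)^ℓ C(j,ℓ) C(k−j, k−ℓ) C(n−k−j, k−ℓ) with n = 2k equals (−1)^j for all 0 ≤ j ≤ k. -/
theorem johnson_eigenvalue_top (n k j : ℕ) (hk : 0 < k) (hn : n = 2 * k) (hj : j ≤ k) :
    ∑ ℓ ∈ Finset.range (k + 1),
      (-1 : ℤ) ^ ℓ * (Nat.choose j ℓ) * (Nat.choose (k - j) (k - ℓ)) *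
        (Nat.choose (n - k - j) (k - ℓ)) = (-1 : ℤ) ^ j := by
  have hnk : n - k - j = k - j := by omega
  rw [hnk]
  rw [Finset.sum_eq_single j]
  · simp
  · intro ℓ hℓ hne
    rcases lt_or_gt_of_ne hne with h | h
    · have : k - j < k - ℓ := by omega
      rw [Nat.choose_eq_zero_of_lt this]
      ring
    · rw [Nat.choose_eq_zero_of_lt h]
      simp
  · intro h
    exact absurd (Finset.mem_range.mpr (by omega)) h
end

section
/- For integers 1 ≤ i ≤ d−1, if 1 − 2i/d ∈ {−1, −1/2, 0, 1/2, 1} and 1 − 4i/d + 4i(i−1)/(d(d−1)) ∈ {−1, −1/2, 0, 1/2, 1} (with d ≥ 2), then (d,i) ∈ {(2,1), (4,1), (4,3)}. -/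
/-!
Write `t = 1 - 2i/d` for the first eigenvalue. The second one equals `(d t² - 1)/(d - 1)`.
Since `0 < i < d` we have `|t| < 1`, so `t² ∈ {0, 1/4}`; for `d > 4` this makes the second
eigenvalue nonzero of absolute value below `1/2`, so it is not in the set. This leaves `d ≤ 4`,
where the finitely many pairs `(d, i)` are checked directly.
-/

lemma sq_eq_zero_or_quarter_of_mem {q : ℚ} (hq : q ∈ ({-1, -1/2, 0, 1/2, 1} : Set ℚ))
    (hlt : |q| < 1) : q ^ 2 = 0 ∨ q ^ 2 = 1 / 4 := by
  rcases hq with rfl | rfl | rfl | rfl | rfl <;> revert hlt <;> norm_num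

lemma eq_zero_of_mem_of_abs_lt_half {q : ℚ} (hq : q ∈ ({-1, -1/2, 0, 1/2, 1} : Set ℚ))
    (hlt : |q| < 1 / 2) : q = 0 := by
  rcases hq with rfl | rfl | rfl | rfl | rfl <;> revert hlt <;> norm_num

lemma abs_one_sub_two_mul_div_lt_one {d i : ℕ} (hi : 0 < i) (hid : i < d) :
    |1 - 2 * (i : ℚ) / d| < 1 := by
  have hd : (0 : ℚ) < d := by exact_mod_cast hi.trans hid
  have hpos : 0 < 2 * (i : ℚ) / d := by positivity
  have hlt : 2 * (i : ℚ) / d < 2 := by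
    rw [div_lt_iff₀ hd]
    exact_mod_cast (by omega : 2 * i < 2 * d)
  rw [abs_lt]
  constructor <;> linarith

lemma eigenvalue_two_eq_eigenvalue_one_sq {K : Type*} [Field K] {d : K} (hd : d ≠ 0)
    (hd1 : d - 1 ≠ 0) (i : K) :
    1 - 4 * i / d + 4 * i * (i - 1) / (d * (d - 1)) = (d * (1 - 2 * i / d) ^ 2 - 1) / (d - 1) := by
  field_simp
  ring

lemma le_four_of_div_mem {d t : ℚ} (ht : t ^ 2 = 0 ∨ t ^ 2 = 1 / 4)
    (h : (d * t ^ 2 - 1) / (d - 1) ∈ ({-1, -1/2, 0, 1/2, 1} : Set ℚ)) : d ≤ 4 := by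
  by_contra! h4
  have hd1 : 0 < d - 1 := by linarith
  have hne : (d * t ^ 2 - 1) / (d - 1) ≠ 0 := by
    rcases ht with ht | ht <;> rw [ht] <;> exact div_ne_zero (by linarith) hd1.ne'
  refine hne (eq_zero_of_mem_of_abs_lt_half h ?_)
  rw [abs_div, abs_of_pos hd1, div_lt_iff₀ hd1, abs_lt]
  rcases ht with ht | ht <;> rw [ht] <;> constructor <;> linarith

theorem hamming_periodic_classes (d i : ℕ) (hd : 2 ≤ d) (hi1 : 1 ≤ i) (hi2 : i ≤ d - 1)
    (h1 : (1 - 2 * (i : ℚ) / d) ∈ ({-1, -1/2, 0, 1/2, 1} : Set ℚ))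
    (h2 : (1 - 4 * (i : ℚ) / d + 4 * i * (i - 1) / (d * (d - 1))) ∈ ({-1, -1/2, 0, 1/2, 1} : Set ℚ)) :
    (d = 2 ∧ i = 1) ∨ (d = 4 ∧ i = 1) ∨ (d = 4 ∧ i = 3) := by
  have hd' : (1 : ℚ) < d := by exact_mod_cast hd
  have ht := sq_eq_zero_or_quarter_of_mem h1 (abs_one_sub_two_mul_div_lt_one hi1 (by omega))
  rw [eigenvalue_two_eq_eigenvalue_one_sq (by positivity) (sub_ne_zero.2 hd'.ne')] at h2
  have h4 : d ≤ 4 := by exact_mod_cast le_four_of_div_mem ht h2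
  interval_cases d <;> interval_cases i <;> revert h1 h2 <;> norm_num
end

section
/- Let P be a real symmetric n×n matrix with largest eigenvalue 1, and suppose e_u and e_v are standard basis vectors with u ≠ v. If T_τ(P) e_u = γ e_v for some γ ∈ {−1, 1}, and the eigenspace of P for eigenvalue 1 contains a vector x with all entries strictly positive, then γ = 1. -/
open Matrix Polynomial in
lemma cheb_eval_one (k : ℤ) : (Polynomial.Chebyshev.T ℝ k).eval 1 = 1 := by
  induction k using Polynomial.Chebyshev.induct with
  | zero => simp [Polynomial.Chebyshev.T_zero]
  | one => simp [Polynomial.Chebyshev.T_one]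
  | add_two n ih1 ih2 =>
    rw [Polynomial.Chebyshev.T_add_two]
    simp [ih1, ih2]
    ring
  | neg_add_one n ih1 ih2 =>
    rw [Polynomial.Chebyshev.T_neg] at ih1
    rw [Polynomial.Chebyshev.T_sub_one]
    simp [ih1, ih2]
    linarith

open Matrix in
lemma aeval_mulVec_eig {n : Type*} [Fintype n] [DecidableEq n]
    (P : Matrix n n ℝ) (x : n → ℝ) (hx : P *ᵥ x = x) (p : Polynomial ℝ) :
    (Polynomial.aeval P) p *ᵥ x = p.eval 1 • x := by
  induction p using Polynomial.induction_on' with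
  | add p q hp hq => simp [add_mulVec, hp, hq, add_smul]
  | monomial k a =>
    have hpk : ∀ k : ℕ, P ^ k *ᵥ x = x := by
      intro k
      induction k with
      | zero => simp
      | succ k ih => rw [pow_succ, ← mulVec_mulVec, hx, ih]
    simp [Polynomial.aeval_monomial, Matrix.smul_mulVec, hpk, ← Matrix.mulVec_mulVec,
      Algebra.algebraMap_eq_smul_one, Matrix.smul_mul, mul_comm, smul_smul]

open Matrix in
lemma aeval_isSymm {n : Type*} [Fintype n] [DecidableEq n]
    (P : Matrix n n ℝ) (hsymm : P.IsSymm) (p : Polynomial ℝ) :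
    ((Polynomial.aeval P) p).IsSymm := by
  induction p using Polynomial.induction_on' with
  | add p q hp hq => simpa [Matrix.IsSymm, transpose_add] using congrArg₂ (· + ·) hp hq
  | monomial k a =>
    simp [Polynomial.aeval_monomial, Matrix.IsSymm, transpose_smul, transpose_mul, transpose_pow,
      hsymm.eq, Algebra.algebraMap_eq_smul_one, Matrix.smul_mul]

open Matrix in
theorem pst_gamma_eq_one {n : Type*} [Fintype n] [DecidableEq n]
    (P : Matrix n n ℝ) (hsymm : P.IsSymm)
    (hmax : ∀ (μ : ℝ) (y : n → ℝ), y ≠ 0 → P *ᵥ y = μ • y → μ ≤ 1)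
    (x : n → ℝ) (hxpos : ∀ i, 0 < x i) (hx : P *ᵥ x = x)
    (u v : n) (huv : u ≠ v) (γ : ℝ) (hγ : γ = -1 ∨ γ = 1) (τ : ℕ) (hτ : 0 < τ)
    (hpst : (Polynomial.aeval P) (Polynomial.Chebyshev.T ℝ (τ : ℤ)) *ᵥ (Pi.single u 1 : n → ℝ) =
      γ • (Pi.single v 1 : n → ℝ)) :
    γ = 1 := by
  set M := (Polynomial.aeval P) (Polynomial.Chebyshev.T ℝ (τ : ℤ)) with hM
  have hMsymm : M.IsSymm := aeval_isSymm P hsymm _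
  have hMx : M *ᵥ x = x := by
    rw [hM, aeval_mulVec_eig P x hx, cheb_eval_one, one_smul]
  have key : x ⬝ᵥ (M *ᵥ (Pi.single u 1 : n → ℝ)) = x u := by
    rw [dotProduct_mulVec, ← Matrix.mulVec_transpose, hMsymm.eq, hMx]
    simp [dotProduct_single]
  rw [hpst] at key
  have hv : γ * x v = x u := by
    simpa [dotProduct_smul, dotProduct_single, mul_comm] using key
  rcases hγ with h | h
  · exfalso
    have := hxpos u
    rw [← hv, h] at this
    have := hxpos v
    linarith
  · exact h
end
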